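/- arXiv:2111.11006 — 2 statements merged into one kernel-verified Lean document; each statement's English description precedes it below -/
import Mathlib

section
/- Let G₁ be a simple connected graph with n₁ vertices and m₁ edges, let S(G₁) be its subdivision graph with m₁' = 2m₁ edges, and let G₂ be a simple connected graph with n₂ vertices and m₂ edges. Then the first hyper Zagreb index of the subdivision vertex join satisfies HM₁(G₁ ∔ G₂) = m₁[5·M₁(G₂) + 4m₁m₂] + HM₁(G₂) + m₁'(2 + n₂)² + m₁(m₁ + n₂ + 2)[n₂(m₁ + n₂ + 2) + 4m₂] + Σ_{uv∈E(S(G₁))} [d_{G₁}(u)² + (4 + 2n₂)·d_{G₁}(u)], where in the last sum each edge of S(G₁) joins an original vertex u ∈ V(G₁) to a subdivision vertex, and d_{G₁}(u) is the degree of that original endpoint u in G₁. -/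
open Finset

/-- The subdivision graph `S(G)`: one new vertex inserted on every edge of `G`. -/
def subdivisionGraph {V₁ : Type*} (G : SimpleGraph V₁) : SimpleGraph (V₁ ⊕ G.edgeSet) where
  Adj x y :=
    match x, y with
    | Sum.inl u, Sum.inr e => u ∈ (e : Sym2 V₁)
    | Sum.inr e, Sum.inl u => u ∈ (e : Sym2 V₁)
    | _, _ => False
  symm := by
    constructor
    rintro (u | e) (v | f) h
    · exact h.elim
    · exact h
    · exact h
    · exact h.elim
  loopless := by constructor; rintro (u | e) h <;> exact h

instance subdivisionGraph.adjDecidable {V₁ : Type*} (G : SimpleGraph V₁) [DecidableEq V₁] :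
    DecidableRel (subdivisionGraph G).Adj
  | Sum.inl u, Sum.inr e => inferInstanceAs (Decidable (u ∈ (e : Sym2 V₁)))
  | Sum.inr e, Sum.inl u => inferInstanceAs (Decidable (u ∈ (e : Sym2 V₁)))
  | Sum.inl _, Sum.inl _ => inferInstanceAs (Decidable False)
  | Sum.inr _, Sum.inr _ => inferInstanceAs (Decidable False)

/-- The subdivision vertex join `G₁ ∔ G₂`: the disjoint union of `S(G₁)` and `G₂`,
with every subdivision (new) vertex of `S(G₁)` joined to every vertex of `G₂`. -/
def subdivisionVertexJoin {V₁ V₂ : Type*} (G₁ : SimpleGraph V₁) (G₂ : SimpleGraph V₂) :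
    SimpleGraph (V₁ ⊕ G₁.edgeSet ⊕ V₂) where
  Adj x y :=
    match x, y with
    | Sum.inl u, Sum.inr (Sum.inl e) => u ∈ (e : Sym2 V₁)
    | Sum.inr (Sum.inl e), Sum.inl u => u ∈ (e : Sym2 V₁)
    | Sum.inr (Sum.inl _), Sum.inr (Sum.inr _) => True
    | Sum.inr (Sum.inr _), Sum.inr (Sum.inl _) => True
    | Sum.inr (Sum.inr u), Sum.inr (Sum.inr v) => G₂.Adj u v
    | _, _ => False
  symm := by
    constructor
    rintro (u | e | u) (v | f | v) h <;> first | exact h.elim | exact h | trivial | exact h.symm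
  loopless := by
    constructor
    rintro (u | e | u) h
    · exact h
    · exact h
    · exact G₂.loopless.irrefl u h

instance subdivisionVertexJoin.adjDecidable {V₁ V₂ : Type*} (G₁ : SimpleGraph V₁)
    (G₂ : SimpleGraph V₂) [DecidableEq V₁] [DecidableRel G₂.Adj] :
    DecidableRel (subdivisionVertexJoin G₁ G₂).Adj
  | Sum.inl u, Sum.inr (Sum.inl e) => inferInstanceAs (Decidable (u ∈ (e : Sym2 V₁)))
  | Sum.inr (Sum.inl e), Sum.inl u => inferInstanceAs (Decidable (u ∈ (e : Sym2 V₁)))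
  | Sum.inr (Sum.inl _), Sum.inr (Sum.inr _) => inferInstanceAs (Decidable True)
  | Sum.inr (Sum.inr _), Sum.inr (Sum.inl _) => inferInstanceAs (Decidable True)
  | Sum.inr (Sum.inr u), Sum.inr (Sum.inr v) => inferInstanceAs (Decidable (G₂.Adj u v))
  | Sum.inl _, Sum.inl _ => inferInstanceAs (Decidable False)
  | Sum.inl _, Sum.inr (Sum.inr _) => inferInstanceAs (Decidable False)
  | Sum.inr (Sum.inr _), Sum.inl _ => inferInstanceAs (Decidable False)
  | Sum.inr (Sum.inl _), Sum.inr (Sum.inl _) => inferInstanceAs (Decidable False)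

/-- First Zagreb index `M₁(G) = ∑ v, d(v)²`. -/
def firstZagreb {V : Type*} [Fintype V] (G : SimpleGraph V) [DecidableRel G.Adj] : ℤ :=
  ∑ v, (G.degree v : ℤ) ^ 2

/-- Forgotten topological index `F(G) = ∑ v, d(v)³`. -/
def forgottenIndex {V : Type*} [Fintype V] (G : SimpleGraph V) [DecidableRel G.Adj] : ℤ :=
  ∑ v, (G.degree v : ℤ) ^ 3

/-- First hyper Zagreb index `HM₁(G) = ∑_{uv ∈ E(G)} (d(u) + d(v))²`. -/
def hyperZagreb {V : Type*} [Fintype V] [DecidableEq V] (G : SimpleGraph V)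
    [DecidableRel G.Adj] : ℤ :=
  ∑ e ∈ G.edgeFinset,
    Sym2.lift ⟨fun u v => ((G.degree u : ℤ) + (G.degree v : ℤ)) ^ 2, fun _ _ => by ring⟩ e

/-- Reduced second Zagreb index `RM₂(G) = ∑_{uv ∈ E(G)} (d(u) - 1)(d(v) - 1)`. -/
def reducedSecondZagreb {V : Type*} [Fintype V] [DecidableEq V] (G : SimpleGraph V)
    [DecidableRel G.Adj] : ℤ :=
  ∑ e ∈ G.edgeFinset,
    Sym2.lift ⟨fun u v => ((G.degree u : ℤ) - 1) * ((G.degree v : ℤ) - 1), fun _ _ => by ring⟩ e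

/-!
Doubling an edge sum turns it into a sum over ordered pairs of adjacent vertices, which splits
along `V(G₁) ⊕ E(G₁) ⊕ V(G₂)`. Only three kinds of edges of `G₁ ∔ G₂` survive: an original vertex
`u` of `G₁` with a subdivision vertex (degrees `d_{G₁}(u)` and `2 + n₂`), a subdivision vertex
with a vertex `v` of `G₂` (degrees `2 + n₂` and `m₁ + d_{G₂}(v)`), and the edges of `G₂`, whose
end degrees are shifted by `m₁`. Expanding the squares, each class reduces to `M₁`, `HM₁` and
edge counts via the handshake lemma and `∑_{uv ∈ E} (d(u) + d(v)) = M₁`.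
-/

theorem Sym2.sum_ite_mem {α R : Type*} [Fintype α] [DecidableEq α] [NonAssocSemiring R]
    (z : Sym2 α) (hz : ¬z.IsDiag) (c : R) :
    ∑ a, (if a ∈ z then c else 0) = 2 * c := by
  rw [← sum_filter, sum_const,
    show univ.filter (· ∈ z) = z.toFinset by ext; simp,
    Sym2.card_toFinset_of_not_isDiag z hz, nsmul_eq_mul, Nat.cast_ofNat]

namespace SimpleGraph

variable {V : Type*} [Fintype V] (G : SimpleGraph V) [DecidableRel G.Adj] {R : Type*}

theorem sum_ite_adj [NonAssocSemiring R] (v : V) (c : R) :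
    ∑ w, (if G.Adj v w then c else 0) = G.degree v * c := by
  rw [← sum_filter, sum_const, ← neighborFinset_eq_filter,
    card_neighborFinset_eq_degree, nsmul_eq_mul]

theorem degree_eq_sum_ite_adj (v : V) : G.degree v = ∑ w, if G.Adj v w then 1 else 0 := by
  rw [sum_ite_adj, Nat.cast_id, mul_one]

theorem sum_degrees_cast_eq_two_mul_card_edgeFinset [NonAssocSemiring R] :
    ∑ v, (G.degree v : R) = 2 * #G.edgeFinset := by
  rw [← Nat.cast_sum, sum_degrees_eq_twice_card_edges, Nat.cast_mul, Nat.cast_ofNat]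

theorem sum_sq_degree_add_const (c : ℤ) :
    ∑ v, ((G.degree v : ℤ) + c) ^ 2 =
      firstZagreb G + 4 * c * #G.edgeFinset + Fintype.card V * c ^ 2 := by
  simp only [add_sq, sum_add_distrib, ← sum_mul, ← mul_sum,
    sum_degrees_cast_eq_two_mul_card_edgeFinset,
    sum_const, card_univ, nsmul_eq_mul, firstZagreb]
  ring

variable [DecidableEq V]

theorem sum_edgeSet_ite_mem [NonAssocSemiring R] (v : V) (c : R) :
    ∑ e : G.edgeSet, (if v ∈ (e : Sym2 V) then c else 0) = G.degree v * c := by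
  rw [← sum_subtype G.edgeFinset (fun _ => mem_edgeFinset) (fun e => if v ∈ e then c else 0),
    ← sum_filter, ← incidenceFinset_eq_filter, sum_const,
    card_incidenceFinset_eq_degree, nsmul_eq_mul]

theorem sum_sum_ite_adj {M : Type*} [AddCommMonoid M] (h : V → V → M) :
    ∑ u, ∑ v, (if G.Adj u v then h u v else 0) =
      ∑ e ∈ G.edgeFinset, Sym2.lift ⟨fun a b => h a b + h b a, fun _ _ => add_comm _ _⟩ e := by
  have sum_darts : ∑ u, ∑ v, (if G.Adj u v then h u v else 0) = ∑ d : G.Dart, h d.fst d.snd := by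
    rw [← sum_product', ← sum_filter]
    exact sum_bij' (fun p hp => ⟨p, (mem_filter.1 hp).2⟩) (fun d _ => d.toProd)
      (by simp) (by simp) (by simp) (by simp) (by simp)
  rw [sum_darts, ← sum_fiberwise_of_maps_to (g := Dart.edge) (t := G.edgeFinset)
    (fun d _ => mem_edgeFinset.2 d.edge_mem)]
  refine sum_congr rfl fun e he => ?_
  induction e using Sym2.ind with
  | h a b =>
    let d : G.Dart := ⟨(a, b), mem_edgeFinset.1 he⟩
    rw [show univ.filter (fun d' : G.Dart => d'.edge = s(a, b)) = {d, d.symm} from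
      d.edge_fiber, sum_pair d.symm_ne.symm]
    rfl

theorem sum_sum_ite_adj_of_symm [NonAssocSemiring R] (f : V → V → R)
    (hf : ∀ a b, f a b = f b a) :
    ∑ u, ∑ v, (if G.Adj u v then f u v else 0) =
      2 * ∑ e ∈ G.edgeFinset, Sym2.lift ⟨f, hf⟩ e := by
  rw [sum_sum_ite_adj, mul_sum]
  refine sum_congr rfl fun e _ => ?_
  induction e using Sym2.ind with
  | h a b => simp only [Sym2.lift_mk, hf b a, two_mul]

theorem sum_edgeFinset_lift_add [NonAssocSemiring R] (g : V → R) :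
    ∑ e ∈ G.edgeFinset, Sym2.lift ⟨fun a b => g a + g b, fun _ _ => add_comm _ _⟩ e =
      ∑ v, G.degree v * g v := by
  rw [← sum_sum_ite_adj G fun a _ => g a]
  exact sum_congr rfl fun v _ => sum_ite_adj G v (g v)

theorem two_mul_hyperZagreb :
    2 * hyperZagreb G =
      ∑ u, ∑ v, if G.Adj u v then ((G.degree u : ℤ) + G.degree v) ^ 2 else 0 :=
  (sum_sum_ite_adj_of_symm G _ _).symm

theorem sum_edgeFinset_sq_const_add_degree (c : ℤ) :
    ∑ e ∈ G.edgeFinset,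
        Sym2.lift ⟨fun a b => (c + G.degree a + (c + G.degree b)) ^ 2, fun _ _ => by ring⟩ e =
      hyperZagreb G + 4 * c * firstZagreb G + 4 * c ^ 2 * #G.edgeFinset := by
  have expand : ∀ e : Sym2 V,
      Sym2.lift ⟨fun a b => (c + G.degree a + (c + G.degree b)) ^ 2, fun _ _ => by ring⟩ e =
        Sym2.lift ⟨fun a b => ((G.degree a : ℤ) + G.degree b) ^ 2, fun _ _ => by ring⟩ e
        + 4 * c * Sym2.lift ⟨fun a b => (G.degree a : ℤ) + G.degree b, fun _ _ => add_comm _ _⟩ e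
        + 4 * c ^ 2 := by
    intro e
    induction e using Sym2.ind with
    | h a b => simp only [Sym2.lift_mk]; ring
  simp only [expand, sum_add_distrib, ← mul_sum, sum_const, nsmul_eq_mul,
    sum_edgeFinset_lift_add, firstZagreb, hyperZagreb, ← sq]
  ring

end SimpleGraph

open SimpleGraph

section Subdivision

variable {V₁ V₂ : Type*} (G₁ : SimpleGraph V₁) (G₂ : SimpleGraph V₂)

@[simp] theorem subdivisionGraph_adj_inl_inl (u v : V₁) :
    ¬(subdivisionGraph G₁).Adj (.inl u) (.inl v) := id
@[simp] theorem subdivisionGraph_adj_inl_inr (u : V₁) (e : G₁.edgeSet) :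
    (subdivisionGraph G₁).Adj (.inl u) (.inr e) ↔ u ∈ (e : Sym2 V₁) := Iff.rfl

@[simp] theorem subdivisionVertexJoin_adj_inl_inl (u v : V₁) :
    ¬(subdivisionVertexJoin G₁ G₂).Adj (.inl u) (.inl v) := id
@[simp] theorem subdivisionVertexJoin_adj_inl_edge (u : V₁) (e : G₁.edgeSet) :
    (subdivisionVertexJoin G₁ G₂).Adj (.inl u) (.inr (.inl e)) ↔ u ∈ (e : Sym2 V₁) := Iff.rfl
@[simp] theorem subdivisionVertexJoin_adj_inl_inr (u : V₁) (v : V₂) :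
    ¬(subdivisionVertexJoin G₁ G₂).Adj (.inl u) (.inr (.inr v)) := id
@[simp] theorem subdivisionVertexJoin_adj_edge_inl (e : G₁.edgeSet) (u : V₁) :
    (subdivisionVertexJoin G₁ G₂).Adj (.inr (.inl e)) (.inl u) ↔ u ∈ (e : Sym2 V₁) := Iff.rfl
@[simp] theorem subdivisionVertexJoin_adj_edge_edge (e f : G₁.edgeSet) :
    ¬(subdivisionVertexJoin G₁ G₂).Adj (.inr (.inl e)) (.inr (.inl f)) := id
@[simp] theorem subdivisionVertexJoin_adj_edge_inr (e : G₁.edgeSet) (v : V₂) :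
    (subdivisionVertexJoin G₁ G₂).Adj (.inr (.inl e)) (.inr (.inr v)) := trivial
@[simp] theorem subdivisionVertexJoin_adj_inr_inl (v : V₂) (u : V₁) :
    ¬(subdivisionVertexJoin G₁ G₂).Adj (.inr (.inr v)) (.inl u) := id
@[simp] theorem subdivisionVertexJoin_adj_inr_edge (v : V₂) (e : G₁.edgeSet) :
    (subdivisionVertexJoin G₁ G₂).Adj (.inr (.inr v)) (.inr (.inl e)) := trivial
@[simp] theorem subdivisionVertexJoin_adj_inr_inr (v w : V₂) :
    (subdivisionVertexJoin G₁ G₂).Adj (.inr (.inr v)) (.inr (.inr w)) ↔ G₂.Adj v w := Iff.rfl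

variable [Fintype V₁] [Fintype V₂] [DecidableEq V₁] [DecidableRel G₁.Adj] [DecidableRel G₂.Adj]

theorem degree_subdivisionGraph_inl (u : V₁) :
    (subdivisionGraph G₁).degree (Sum.inl u) = G₁.degree u := by
  rw [degree_eq_sum_ite_adj, Fintype.sum_sum_type]
  simp [-sum_boole, sum_edgeSet_ite_mem]

theorem sum_edgeFinset_subdivisionGraph_lift {R : Type*} [NonAssocSemiring R] (g : V₁ → R) :
    ∑ e ∈ (subdivisionGraph G₁).edgeFinset,
        Sym2.lift ⟨fun x y => Sum.elim g (fun _ => 0) x + Sum.elim g (fun _ => 0) y,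
          fun _ _ => add_comm _ _⟩ e =
      ∑ u, G₁.degree u * g u := by
  rw [sum_edgeFinset_lift_add, Fintype.sum_sum_type]
  simp [degree_subdivisionGraph_inl]

theorem degree_subdivisionVertexJoin_inl (u : V₁) :
    (subdivisionVertexJoin G₁ G₂).degree (.inl u) = G₁.degree u := by
  rw [degree_eq_sum_ite_adj, Fintype.sum_sum_type, Fintype.sum_sum_type]
  simp [-sum_boole, sum_edgeSet_ite_mem]

theorem degree_subdivisionVertexJoin_edge (e : G₁.edgeSet) :
    (subdivisionVertexJoin G₁ G₂).degree (.inr (.inl e)) = 2 + Fintype.card V₂ := by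
  rw [degree_eq_sum_ite_adj, Fintype.sum_sum_type, Fintype.sum_sum_type]
  simp [-sum_boole, Sym2.sum_ite_mem _ (G₁.not_isDiag_of_mem_edgeSet e.2)]

theorem degree_subdivisionVertexJoin_inr (v : V₂) :
    (subdivisionVertexJoin G₁ G₂).degree (.inr (.inr v)) = #G₁.edgeFinset + G₂.degree v := by
  rw [degree_eq_sum_ite_adj, Fintype.sum_sum_type, Fintype.sum_sum_type]
  simp [-sum_boole, sum_ite_adj, edgeFinset_card]

variable [DecidableEq V₂]

theorem hyperZagreb_subdivisionVertexJoin_eq :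
    hyperZagreb (subdivisionVertexJoin G₁ G₂) =
      ∑ u, (G₁.degree u : ℤ) * (G₁.degree u + (2 + Fintype.card V₂)) ^ 2
      + #G₁.edgeFinset * ∑ v, ((G₂.degree v : ℤ) + (#G₁.edgeFinset + Fintype.card V₂ + 2)) ^ 2
      + ∑ e ∈ G₂.edgeFinset, Sym2.lift ⟨fun a b => ((#G₁.edgeFinset : ℤ) + G₂.degree a
          + (#G₁.edgeFinset + G₂.degree b)) ^ 2, fun _ _ => by ring⟩ e := by
  refine mul_left_cancel₀ (two_ne_zero' ℤ) ?_
  rw [two_mul_hyperZagreb, mul_add, mul_add, ← sum_sum_ite_adj_of_symm]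
  simp only [Fintype.sum_sum_type, degree_subdivisionVertexJoin_inl,
    degree_subdivisionVertexJoin_edge, degree_subdivisionVertexJoin_inr,
    subdivisionVertexJoin_adj_inl_inl, subdivisionVertexJoin_adj_inl_edge,
    subdivisionVertexJoin_adj_inl_inr, subdivisionVertexJoin_adj_edge_inl,
    subdivisionVertexJoin_adj_edge_edge, subdivisionVertexJoin_adj_edge_inr,
    subdivisionVertexJoin_adj_inr_inl, subdivisionVertexJoin_adj_inr_edge,
    subdivisionVertexJoin_adj_inr_inr, if_true, if_false, sum_const_zero, add_zero, zero_add,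
    sum_add_distrib, sum_const, card_univ, ← edgeFinset_card, nsmul_eq_mul]
  rw [sum_comm (s := (univ : Finset G₁.edgeSet))]
  push_cast
  set n : ℤ := (Fintype.card V₂ : ℤ)
  set m : ℤ := (#G₁.edgeFinset : ℤ)
  have reorder₁ : ∀ x : ℤ, (2 + n + x) ^ 2 = (x + (2 + n)) ^ 2 := fun x => by ring
  have reorder₂ : ∀ x : ℤ, (m + x + (2 + n)) ^ 2 = (x + (m + n + 2)) ^ 2 := fun x => by ring
  simp only [reorder₁, reorder₂, sum_edgeSet_ite_mem, ← mul_sum]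
  ring

end Subdivision

/-- The first hyper Zagreb index of `G₁ ∔ G₂`.  In the final sum, which ranges over the
edges of `S(G₁)`, each edge joins an original vertex `u ∈ V(G₁)` to a subdivision vertex,
and the summand depends only on the degree in `G₁` of that original endpoint `u`
(subdivision-vertex endpoints contribute `0` via `Sum.elim`). -/
theorem hyperZagreb_subdivisionVertexJoin {V₁ V₂ : Type*} [Fintype V₁] [Fintype V₂]
    [DecidableEq V₁] [DecidableEq V₂] (G₁ : SimpleGraph V₁) (G₂ : SimpleGraph V₂)
    [DecidableRel G₁.Adj] [DecidableRel G₂.Adj]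
    (n₂ m₁ m₂ m₁' : ℕ)
    (hn₂ : Fintype.card V₂ = n₂)
    (hm₁ : G₁.edgeFinset.card = m₁) (hm₂ : G₂.edgeFinset.card = m₂)
    (hm₁'2 : m₁' = 2 * m₁) :
    hyperZagreb (subdivisionVertexJoin G₁ G₂)
      = m₁ * (5 * firstZagreb G₂ + 4 * m₁ * m₂) + hyperZagreb G₂
        + m₁' * (2 + (n₂ : ℤ)) ^ 2
        + m₁ * ((m₁ : ℤ) + n₂ + 2) * ((n₂ : ℤ) * ((m₁ : ℤ) + n₂ + 2) + 4 * m₂)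
        + ∑ e ∈ (subdivisionGraph G₁).edgeFinset,
            Sym2.lift
              ⟨fun x y =>
                Sum.elim
                  (fun u : V₁ => (G₁.degree u : ℤ) ^ 2 + (4 + 2 * (n₂ : ℤ)) * (G₁.degree u))
                  (fun _ : G₁.edgeSet => 0) x
                + Sum.elim
                  (fun u : V₁ => (G₁.degree u : ℤ) ^ 2 + (4 + 2 * (n₂ : ℤ)) * (G₁.degree u))
                  (fun _ : G₁.edgeSet => 0) y,
                fun _ _ => by ring⟩ e := by
  subst hn₂ hm₁ hm₂ hm₁'2
  rw [hyperZagreb_subdivisionVertexJoin_eq, sum_edgeFinset_sq_const_add_degree,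
    sum_sq_degree_add_const, sum_edgeFinset_subdivisionGraph_lift]
  have expand : ∀ u, (G₁.degree u : ℤ) * (G₁.degree u + (2 + Fintype.card V₂)) ^ 2 =
      G₁.degree u * (G₁.degree u ^ 2 + (4 + 2 * Fintype.card V₂) * G₁.degree u)
        + (2 + Fintype.card V₂) ^ 2 * G₁.degree u := fun u => by ring
  simp only [expand, sum_add_distrib, ← mul_sum, sum_degrees_cast_eq_two_mul_card_edgeFinset]
  push_cast
  ring
end

section
/- Let P_l be the path on l ≥ 2 vertices and C_m the cycle on m ≥ 3 vertices. Then the forgotten topological index of their corona join product satisfies F(P_l ⊕ C_m) = 8l − 14 + 8lm + 3lm(4l − 6) + 12ml² + 6l²m²(l − 1) + 6ml³ + l⁴m(m² + 1). -/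
open Finset

/-- Corona join product `G₁ ⊕ G₂`: one copy of `G₁` together with one copy of `G₂` for each
vertex of `G₁`, where every vertex of every copy of `G₂` is joined to every vertex of `G₁`. -/
def coronaJoin {V₁ V₂ : Type*} (G₁ : SimpleGraph V₁) (G₂ : SimpleGraph V₂) :
    SimpleGraph (V₁ ⊕ V₁ × V₂) where
  Adj x y :=
    match x, y with
    | Sum.inl u, Sum.inl v => G₁.Adj u v
    | Sum.inl _, Sum.inr _ => True
    | Sum.inr _, Sum.inl _ => True
    | Sum.inr (i, u), Sum.inr (j, v) => i = j ∧ G₂.Adj u v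
  symm := ⟨by
    rintro (u | ⟨i, u⟩) (v | ⟨j, v⟩) h
    · exact h.symm
    · trivial
    · trivial
    · exact ⟨h.1.symm, h.2.symm⟩⟩
  loopless := ⟨by
    rintro (u | ⟨i, u⟩) h
    · exact G₁.loopless.irrefl u h
    · exact G₂.loopless.irrefl u h.2⟩

instance coronaJoin.adjDecidable {V₁ V₂ : Type*} (G₁ : SimpleGraph V₁) (G₂ : SimpleGraph V₂)
    [DecidableEq V₁] [DecidableRel G₁.Adj] [DecidableRel G₂.Adj] :
    DecidableRel (coronaJoin G₁ G₂).Adj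
  | Sum.inl u, Sum.inl v => inferInstanceAs (Decidable (G₁.Adj u v))
  | Sum.inl _, Sum.inr _ => inferInstanceAs (Decidable True)
  | Sum.inr _, Sum.inl _ => inferInstanceAs (Decidable True)
  | Sum.inr (i, u), Sum.inr (j, v) => inferInstanceAs (Decidable (i = j ∧ G₂.Adj u v))

instance pathGraph.adjDecidable (n : ℕ) : DecidableRel (SimpleGraph.pathGraph n).Adj :=
  fun u v => decidable_of_iff (u.val + 1 = v.val ∨ v.val + 1 = u.val)
    SimpleGraph.pathGraph_adj.symm

/-!
In `G₁ ⊕ G₂` a vertex `v` of `G₁` keeps its `G₁`-neighbours and gains all `n₁ n₂` vertices of the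
copies of `G₂`, while a vertex `u` of a copy of `G₂` gains the `n₁` vertices of `G₁`. Hence
`F(G₁ ⊕ G₂) = ∑ᵥ (d(v) + n₁ n₂)³ + n₁ ∑ᵤ (n₁ + d(u))³`. The path `P_l` has two vertices of degree 1
and `l - 2` of degree 2, and `C_m` is 2-regular, so the formula is a polynomial identity.
-/

section CoronaJoin

variable {V₁ V₂ : Type*} {G₁ : SimpleGraph V₁} {G₂ : SimpleGraph V₂}

@[simp]
lemma coronaJoin_adj_inl_inl {u v : V₁} :
    (coronaJoin G₁ G₂).Adj (.inl u) (.inl v) ↔ G₁.Adj u v := Iff.rfl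

@[simp]
lemma coronaJoin_adj_inl_inr {u : V₁} {p : V₁ × V₂} :
    (coronaJoin G₁ G₂).Adj (.inl u) (.inr p) := trivial

@[simp]
lemma coronaJoin_adj_inr_inl {p : V₁ × V₂} {u : V₁} :
    (coronaJoin G₁ G₂).Adj (.inr p) (.inl u) := trivial

@[simp]
lemma coronaJoin_adj_inr_inr {i j : V₁} {u v : V₂} :
    (coronaJoin G₁ G₂).Adj (.inr (i, u)) (.inr (j, v)) ↔ i = j ∧ G₂.Adj u v := Iff.rfl

variable [Fintype V₁] [Fintype V₂] [DecidableEq V₁] [DecidableRel G₁.Adj] [DecidableRel G₂.Adj]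

lemma coronaJoin_neighborFinset_inl (v : V₁) :
    (coronaJoin G₁ G₂).neighborFinset (.inl v) = (G₁.neighborFinset v).disjSum univ := by
  ext (u | p) <;> simp

lemma coronaJoin_neighborFinset_inr (i : V₁) (u : V₂) :
    (coronaJoin G₁ G₂).neighborFinset (.inr (i, u))
      = univ.disjSum ({i} ×ˢ G₂.neighborFinset u) := by
  ext (w | ⟨j, w⟩) <;> simp [and_comm]

lemma coronaJoin_degree_inl (v : V₁) :
    (coronaJoin G₁ G₂).degree (.inl v) = G₁.degree v + Fintype.card V₁ * Fintype.card V₂ := by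
  simp [← SimpleGraph.card_neighborFinset_eq_degree, coronaJoin_neighborFinset_inl]

lemma coronaJoin_degree_inr (i : V₁) (u : V₂) :
    (coronaJoin G₁ G₂).degree (.inr (i, u)) = Fintype.card V₁ + G₂.degree u := by
  simp [← SimpleGraph.card_neighborFinset_eq_degree, coronaJoin_neighborFinset_inr]

theorem forgottenIndex_coronaJoin :
    forgottenIndex (coronaJoin G₁ G₂)
      = ∑ v, ((G₁.degree v : ℤ) + Fintype.card V₁ * Fintype.card V₂) ^ 3
        + Fintype.card V₁ * ∑ u, ((Fintype.card V₁ : ℤ) + G₂.degree u) ^ 3 := by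
  simp [forgottenIndex, Fintype.sum_sum_type, Fintype.sum_prod_type, coronaJoin_degree_inl,
    coronaJoin_degree_inr]

end CoronaJoin

section PathCycle

open SimpleGraph

variable {n : ℕ}

lemma pathGraph_degree_zero : (pathGraph (n + 2)).degree 0 = 1 := by
  rw [← card_neighborFinset_eq_degree, card_eq_one]
  refine ⟨1, ?_⟩
  ext u
  simp only [mem_neighborFinset, pathGraph_adj, mem_singleton, Fin.ext_iff, Fin.val_zero,
    Fin.val_one]
  omega

lemma pathGraph_degree_last : (pathGraph (n + 2)).degree (Fin.last (n + 1)) = 1 := by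
  rw [← card_neighborFinset_eq_degree, card_eq_one]
  exact ⟨(Fin.last n).castSucc, by ext u; simp [pathGraph_adj, Fin.ext_iff]; omega⟩

lemma pathGraph_degree_succ_castSucc (i : Fin n) :
    (pathGraph (n + 2)).degree i.castSucc.succ = 2 := by
  rw [← card_neighborFinset_eq_degree, card_eq_two]
  refine ⟨i.castSucc.castSucc, i.succ.succ, by simp [Fin.ext_iff]; omega, ?_⟩
  ext u; simp [pathGraph_adj, Fin.ext_iff]; omega

theorem sum_pathGraph_degree {M : Type*} [AddCommMonoid M] {l : ℕ} (hl : 2 ≤ l) (f : ℕ → M) :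
    ∑ v, f ((pathGraph l).degree v) = 2 • f 1 + (l - 2) • f 2 := by
  obtain ⟨n, rfl⟩ := Nat.exists_eq_add_of_le' hl
  rw [Fin.sum_univ_succ, Fin.sum_univ_castSucc]
  simp only [pathGraph_degree_zero, Fin.succ_last, pathGraph_degree_last,
    pathGraph_degree_succ_castSucc, sum_const, card_univ, Fintype.card_fin]
  rw [Nat.add_sub_cancel, two_nsmul]
  abel

lemma cycleGraph_degree {m : ℕ} (hm : 3 ≤ m) (v : Fin m) : (cycleGraph m).degree v = 2 := by
  obtain ⟨k, rfl⟩ := Nat.exists_eq_add_of_le' hm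
  exact cycleGraph_degree_three_le

end PathCycle

theorem forgottenIndex_coronaJoin_path_cycle (l m : ℕ) (hl : 2 ≤ l) (hm : 3 ≤ m) :
    forgottenIndex (coronaJoin (SimpleGraph.pathGraph l) (SimpleGraph.cycleGraph m))
      = 8 * l - 14 + 8 * l * m + 3 * l * m * (4 * (l : ℤ) - 6) + 12 * m * (l : ℤ) ^ 2
        + 6 * (l : ℤ) ^ 2 * (m : ℤ) ^ 2 * ((l : ℤ) - 1) + 6 * m * (l : ℤ) ^ 3
        + (l : ℤ) ^ 4 * m * ((m : ℤ) ^ 2 + 1) := by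
  simp only [forgottenIndex_coronaJoin, Fintype.card_fin, cycleGraph_degree hm, sum_const,
    card_univ, nsmul_eq_mul]
  rw [sum_pathGraph_degree hl fun d => ((d : ℤ) + l * m) ^ 3]
  push_cast [nsmul_eq_mul, Nat.cast_sub hl]
  ring
end
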